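/- arXiv:1703.03021 — 2 statements merged into one kernel-verified Lean document; each statement's English description precedes it below -/
import Mathlib

section
/- Let A be an algebra, α ≤ β congruences of A, and ζ(α,β) the quasi-centralizer as defined. Then ζ(α,β) is a congruence of A, i.e., it is preserved by all term operations of A. -/
/-- A set of finitary operations on `A`, i.e. the basic operations of an algebra `(A, F)`. -/
abbrev OpSet (A : Type*) := Set (Σ n : ℕ, (Fin n → A) → A)

/-- The term operations of the algebra `(A, F)`: the clone generated by `F`,
containing all projections and closed under composition. -/
inductive IsTermOp {A : Type*} (F : OpSet A) : ∀ n : ℕ, ((Fin n → A) → A) → Prop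
  | proj {n : ℕ} (i : Fin n) : IsTermOp F n fun x => x i
  | comp {n k : ℕ} (f : (Fin k → A) → A) (hf : Sigma.mk k f ∈ F)
      (g : Fin k → (Fin n → A) → A) (hg : ∀ i, IsTermOp F n (g i)) :
      IsTermOp F n fun x => f fun i => g i x

/-- An `n`-ary operation preserves the binary relation `θ`. -/
def PreservesRel {A : Type*} (θ : A → A → Prop) (n : ℕ) (f : (Fin n → A) → A) : Prop :=
  ∀ a b : Fin n → A, (∀ i, θ (a i) (b i)) → θ (f a) (f b)

/-- `θ` is a congruence of the algebra `(A, F)`: an equivalence relation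
preserved by every basic operation. -/
def IsCongruence {A : Type*} (F : OpSet A) (θ : A → A → Prop) : Prop :=
  Equivalence θ ∧ ∀ s ∈ F, PreservesRel θ s.1 s.2

/-- `p : A → A` is a unary polynomial of `(A, F)`: `p x = f (x, b₁, …, bₖ)`
for some `(k+1)`-ary term operation `f` and constants `b₁, …, bₖ ∈ A`. -/
def IsUnaryPolynomial {A : Type*} (F : OpSet A) (p : A → A) : Prop :=
  ∃ (k : ℕ) (f : (Fin (k + 1) → A) → A), IsTermOp F (k + 1) f ∧
    ∃ b : Fin k → A, ∀ x, p x = f (Fin.cons x b)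

/-- `p` maps `β` into `α`: the image of every `β`-related pair is `α`-related
(written `p(β) ⊆ α` in the paper). -/
def MapsInto {A : Type*} (β α : A → A → Prop) (p : A → A) : Prop :=
  ∀ u v : A, β u v → α (p u) (p v)

/-- The quasi-centralizer `ζ(α, β)`: `(a, b) ∈ ζ(α, β)` iff for every term
operation `f(x, y₁, …, yₖ)`, every coordinate `i`, and all tuples `av`, `bv`
differing only in coordinate `i`, where they take values `a` resp. `b`, the
unary polynomial `f(x, av)` maps `β` into `α` iff `f(x, bv)` does. -/
def QuasiCentralizer {A : Type*} (F : OpSet A) (α β : A → A → Prop) (a b : A) : Prop :=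
  ∀ (k : ℕ) (f : (Fin (k + 1) → A) → A), IsTermOp F (k + 1) f →
    ∀ (i : Fin k) (av bv : Fin k → A), av i = a → bv i = b →
      (∀ j : Fin k, j ≠ i → av j = bv j) →
      (MapsInto β α (fun x => f (Fin.cons x av)) ↔ MapsInto β α (fun x => f (Fin.cons x bv)))

/-- Term operations are closed under composition with term operations. -/
theorem isTermOp_comp {A : Type*} {F : OpSet A} :
    ∀ {n : ℕ} {f : (Fin n → A) → A}, IsTermOp F n f →
      ∀ {m : ℕ} (g : Fin n → (Fin m → A) → A), (∀ i, IsTermOp F m (g i)) →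
        IsTermOp F m (fun x => f (fun i => g i x)) := by
  intro n f hf
  induction hf with
  | proj i => intro m g hg; exact hg i
  | comp f' hf' g' hg' ih =>
    intro m g hg
    exact .comp f' hf' _ (fun j => ih j g hg)

/-- Auxiliary tuple: replaces `a` by `b` in the first `t` coordinates. -/
def qcMix {A : Type*} {m : ℕ} (a b : Fin m → A) (t : ℕ) : Fin m → A :=
  fun j => if (j : ℕ) < t then b j else a j

/-- Components of the auxiliary composite operation. -/
def qcG {A : Type*} (k m : ℕ) (i : Fin k) (g : (Fin m → A) → A) :
    Fin (k + 1) → (Fin (k + m + 1) → A) → A :=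
  Fin.cons (fun w => w 0)
    (fun j => if j = i then (fun w => g (fun t => w (Fin.succ (Fin.natAdd k t))))
      else (fun w => w (Fin.succ (Fin.castAdd m j))))

/-- The auxiliary composite operation: substitute `g` applied to fresh
variables into the `i`-th (non-distinguished) slot of `f`. -/
def qcH {A : Type*} (k m : ℕ) (i : Fin k) (g : (Fin m → A) → A)
    (f : (Fin (k + 1) → A) → A) : (Fin (k + m + 1) → A) → A :=
  fun w => f (fun p => qcG k m i g p w)

theorem qcH_isTermOp {A : Type*} {F : OpSet A} {k m : ℕ} (i : Fin k)
    {g : (Fin m → A) → A} (hg : IsTermOp F m g)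
    {f : (Fin (k + 1) → A) → A} (hf : IsTermOp F (k + 1) f) :
    IsTermOp F (k + m + 1) (qcH k m i g f) := by
  refine isTermOp_comp hf (qcG k m i g) ?_
  intro p
  refine Fin.cases ?_ (fun j => ?_) p
  · have : qcG k m i g (0 : Fin (k + 1)) = fun w => w 0 := by
      simp [qcG]
    rw [this]
    exact IsTermOp.proj 0
  · rw [show qcG k m i g j.succ = _ from Fin.cons_succ _ _ j]
    split_ifs with hji
    · exact isTermOp_comp hg _ (fun t => IsTermOp.proj _)
    · exact IsTermOp.proj _

theorem qcH_eval {A : Type*} {k m : ℕ} (i : Fin k) (g : (Fin m → A) → A)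
    (f : (Fin (k + 1) → A) → A) (av : Fin k → A) (u : Fin m → A) (x : A) :
    qcH k m i g f (Fin.cons x (Fin.append av u)) =
      f (Fin.cons x (Function.update av i (g u))) := by
  unfold qcH
  congr 1
  funext p
  refine Fin.cases ?_ (fun j => ?_) p
  · simp [qcG]
  · rw [show qcG k m i g j.succ = _ from Fin.cons_succ _ _ j]
    split_ifs with hji
    · subst hji
      simp [Fin.cons_succ, Fin.append_right]
    · simp [Fin.cons_succ, Fin.append_left, Function.update_of_ne hji]

/-- For congruences `α ≤ β` of an algebra `(A, F)`, the quasi-centralizer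
`ζ(α, β)` is a congruence of `A`: it is an equivalence relation preserved by
all term operations of `A`. -/
theorem quasiCentralizer_is_congruence {A : Type*} (F : OpSet A) (α β : A → A → Prop)
    (hα : IsCongruence F α) (hβ : IsCongruence F β) (hle : ∀ x y, α x y → β x y) :
    Equivalence (QuasiCentralizer F α β) ∧
      ∀ (m : ℕ) (g : (Fin m → A) → A), IsTermOp F m g →
        PreservesRel (QuasiCentralizer F α β) m g := by
  classical
  refine ⟨⟨?_, ?_, ?_⟩, ?_⟩
  · -- reflexivity
    intro a k f hf i av bv hav hbv hoff
    have hab : av = bv := by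
      funext j
      by_cases hj : j = i
      · subst hj; rw [hav, hbv]
      · exact hoff j hj
    rw [hab]
  · -- symmetry
    intro a b hab k f hf i av bv hav hbv hoff
    exact (hab k f hf i bv av hbv hav (fun j hj => (hoff j hj).symm)).symm
  · -- transitivity
    intro a b c h1 h2 k f hf i av cv hav hcv hoff
    have e1 := h1 k f hf i av (Function.update av i b) hav (Function.update_self i b av)
      (fun j hj => (Function.update_of_ne hj b av).symm)
    have e2 := h2 k f hf i (Function.update av i b) cv (Function.update_self i b av) hcv
      (fun j hj => by rw [Function.update_of_ne hj]; exact hoff j hj)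
    exact e1.trans e2
  · -- preservation by term operations
    intro m g hg a b hab k f hf i av bv hav hbv hoff
    have hh : IsTermOp F (k + m + 1) (qcH k m i g f) := qcH_isTermOp i hg hf
    -- single replacement step
    have step : ∀ t : Fin m,
        (MapsInto β α (fun x => qcH k m i g f (Fin.cons x (Fin.append av (qcMix a b t)))) ↔
         MapsInto β α
           (fun x => qcH k m i g f (Fin.cons x (Fin.append av (qcMix a b ((t : ℕ) + 1)))))) := by
      intro t
      refine hab t (k + m) (qcH k m i g f) hh (Fin.natAdd k t)
        (Fin.append av (qcMix a b t)) (Fin.append av (qcMix a b ((t : ℕ) + 1))) ?_ ?_ ?_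
      · rw [Fin.append_right]; simp [qcMix]
      · rw [Fin.append_right]; simp [qcMix]
      · intro j hj
        revert hj
        refine Fin.addCases (fun j' _ => ?_) (fun j' hj => ?_) j
        · rw [Fin.append_left, Fin.append_left]
        · rw [Fin.append_right, Fin.append_right]
          have hjt : (j' : ℕ) ≠ (t : ℕ) := by
            intro hc
            exact hj (congrArg (Fin.natAdd k) (Fin.ext hc))
          simp only [qcMix]
          split_ifs with h1 h2 <;> first | rfl | omega
    have chain : ∀ t : ℕ, t ≤ m →
        (MapsInto β α (fun x => qcH k m i g f (Fin.cons x (Fin.append av (qcMix a b 0)))) ↔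
         MapsInto β α (fun x => qcH k m i g f (Fin.cons x (Fin.append av (qcMix a b t))))) := by
      intro t
      induction t with
      | zero => intro _; exact Iff.rfl
      | succ t ih =>
        intro ht
        exact (ih (le_of_lt (Nat.lt_of_succ_le ht))).trans (step ⟨t, Nat.lt_of_succ_le ht⟩)
    have hmix0 : qcMix a b 0 = a := funext fun j => by simp [qcMix]
    have hmixm : qcMix a b m = b := funext fun j => by simp [qcMix, j.isLt]
    have hupa : Function.update av i (g a) = av := by
      rw [← hav]; exact Function.update_eq_self i av
    have hupb : Function.update av i (g b) = bv := by
      funext j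
      by_cases hj : j = i
      · subst hj; rw [Function.update_self, hbv]
      · rw [Function.update_of_ne hj]; exact hoff j hj
    have final := chain m le_rfl
    simp only [qcH_eval, hmix0, hmixm, hupa, hupb] at final
    exact final
end

section
/- Let A be an algebra and B a subalgebra of A containing a u-maximal element of A. Then every element that is u-maximal in B is also u-maximal in A. -/
/-- `a` is u-maximal for the thin-edge digraph `E` restricted to `S`: `a ∈ S`
and every element asm-reachable from `a` can reach `a` back. -/
def UMaxIn {X : Type*} (E : X → X → Prop) (S : Set X) (a : X) : Prop :=
  a ∈ S ∧ ∀ b : X, Relation.ReflTransGen E a b → Relation.ReflTransGen E b a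

/-- Let `A` be an algebra with thin-edge digraph `EA` (the digraph `G'(A)` of
thin semilattice, majority and affine edges) and `B` a subalgebra of `A` with
thin-edge digraph `EB`. Assume the framework facts: thin edges of `B` are thin
edges of `A`; any two u-maximal elements (of `A`, resp. of `B`) are joined by
directed asm-paths; and from every element a u-maximal element is reachable.
If `B` contains a u-maximal element of `A`, then every element u-maximal in `B`
is also u-maximal in `A`. -/
theorem umax_of_subalgebra_umax {A : Type*} (B : Set A)
    (EA : A → A → Prop) (EB : A → A → Prop)
    (hEBmem : ∀ x y : A, EB x y → x ∈ B ∧ y ∈ B)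
    (hEBA : ∀ x y : A, EB x y → EA x y)
    (hconnA : ∀ a b : A, UMaxIn EA Set.univ a → UMaxIn EA Set.univ b →
      Relation.ReflTransGen EA a b)
    (hexA : ∀ a : A, ∃ b : A, Relation.ReflTransGen EA a b ∧ UMaxIn EA Set.univ b)
    (hconnB : ∀ a b : A, UMaxIn EB B a → UMaxIn EB B b → Relation.ReflTransGen EB a b)
    (hexB : ∀ a ∈ B, ∃ b : A, Relation.ReflTransGen EB a b ∧ UMaxIn EB B b)
    (hmax : ∃ a ∈ B, UMaxIn EA Set.univ a) :
    ∀ b : A, UMaxIn EB B b → UMaxIn EA Set.univ b := by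
  obtain ⟨a, haB, haA⟩ := hmax
  intro b hb
  obtain ⟨b', hab', hb'⟩ := hexB a haB
  -- a reaches b' in EA
  have hab'A : Relation.ReflTransGen EA a b' := Relation.ReflTransGen.mono hEBA _ _ hab'
  -- b' reaches a in EA (a u-max in A)
  have hb'a : Relation.ReflTransGen EA b' a := haA.2 b' hab'A
  -- b reaches b' and b' reaches b in EB
  have hbb' : Relation.ReflTransGen EA b b' := Relation.ReflTransGen.mono hEBA _ _ (hconnB b b' hb hb')
  have hb'b : Relation.ReflTransGen EA b' b := Relation.ReflTransGen.mono hEBA _ _ (hconnB b' b hb' hb)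
  have hba : Relation.ReflTransGen EA b a := hbb'.trans hb'a
  have hab : Relation.ReflTransGen EA a b := hab'A.trans hb'b
  refine ⟨Set.mem_univ b, fun c hbc => ?_⟩
  obtain ⟨d, hcd, hd⟩ := hexA c
  have hda : Relation.ReflTransGen EA d a := hconnA d a hd haA
  exact hcd.trans (hda.trans hab)
end
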